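/- arXiv:1509.07812 — 2 statements merged into one kernel-verified Lean document; each statement's English description precedes it below -/
import Mathlib

section
/- Let Φ = (φ_n)_n be a frame for H and let A be an invertible bounded operator on H. A frame Φ^{gd} = (φ^{gd}_n)_n is a g-dual frame of Φ with corresponding invertible operator A if and only if there exists a bounded operator Θ : H → ℓ²(ℕ) with T_Φ ∘ Θ = 0 such that φ^{gd}_n = (A^{-1})* S_Φ^{-1} φ_n + Θ*(δ_n) for all n ∈ ℕ. -/
noncomputable section

open ContinuousLinearMap
open scoped ComplexInnerProductSpace ENNReal

variable {H : Type*} [NormedAddCommGroup H] [InnerProductSpace ℂ H] [CompleteSpace H]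

/-- The sequence space `ℓ²(ℕ)`. -/
abbrev Ltwo : Type := lp (fun _ : ℕ => ℂ) 2

/-- `φ` is a Bessel sequence with Bessel bound `M`:
`∑ₙ |⟨f, φₙ⟩|² ≤ M‖f‖²` for every `f`.  (Mathlib inner products are conjugate-linear in the
first slot, so `⟪φ n, f⟫` corresponds to the paper's `⟨f, φₙ⟩`.) -/
def IsBesselBound (φ : ℕ → H) (M : ℝ) : Prop :=
  ∀ f : H, Summable (fun n => ‖(⟪φ n, f⟫ : ℂ)‖ ^ 2) ∧
    ∑' n, ‖(⟪φ n, f⟫ : ℂ)‖ ^ 2 ≤ M * ‖f‖ ^ 2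

/-- `φ` is a frame with lower frame bound `m` and upper (Bessel) bound `M`. -/
def IsFrameWith (φ : ℕ → H) (m M : ℝ) : Prop :=
  0 < m ∧ IsBesselBound φ M ∧
    ∀ f : H, m * ‖f‖ ^ 2 ≤ ∑' n, ‖(⟪φ n, f⟫ : ℂ)‖ ^ 2

/-- `φ` is a frame for `H`. -/
def IsFrame (φ : ℕ → H) : Prop := ∃ m M, IsFrameWith φ m M

/-- `U` is the analysis operator of `φ` : `U f = (⟨f, φₙ⟩)ₙ`.
The synthesis operator is then `T_φ = adjoint U` and the frame operator is
`S_φ = adjoint U ∘L U`. -/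
def IsAnalysisOp (φ : ℕ → H) (U : H →L[ℂ] Ltwo) : Prop :=
  ∀ (f : H) (n : ℕ), U f n = (⟪φ n, f⟫ : ℂ)
lemma adjoint_single (φ : ℕ → H) (U : H →L[ℂ] Ltwo) (hU : IsAnalysisOp φ U) (n : ℕ) :
    adjoint U (lp.single 2 n 1) = φ n := by
  apply ext_inner_right ℂ
  intro f
  rw [adjoint_inner_left, lp.inner_single_left, hU f n]
  simp [inner]

lemma Sinv_selfadj (Uφ : H →L[ℂ] Ltwo) (Sinv : H →L[ℂ] H)
    (hS1 : (adjoint Uφ ∘L Uφ) ∘L Sinv = 1) (hS2 : Sinv ∘L (adjoint Uφ ∘L Uφ) = 1) :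
    adjoint Sinv = Sinv := by
  have hSa : adjoint (adjoint Uφ ∘L Uφ) = adjoint Uφ ∘L Uφ := by
    rw [adjoint_comp, adjoint_adjoint]
  have h1 : adjoint Sinv ∘L (adjoint Uφ ∘L Uφ) = 1 := by
    rw [← hSa, ← adjoint_comp, hS1]; exact adjoint_id
  calc adjoint Sinv = adjoint Sinv ∘L ((adjoint Uφ ∘L Uφ) ∘L Sinv) := by rw [hS1]; rfl
    _ = (adjoint Sinv ∘L (adjoint Uφ ∘L Uφ)) ∘L Sinv := by simp [ContinuousLinearMap.comp_assoc]
    _ = Sinv := by rw [h1]; rfl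

/-- Let Φ be a frame for H, `Sinv = S_Φ^{-1}`, and `A` an invertible bounded
operator with inverse `Ainv`.  A frame Φᵍᵈ (with analysis operator `V`) is a g-dual frame of
Φ with corresponding invertible operator A (i.e. `T_Φ U_{Φᵍᵈ} = A⁻¹`) iff there is a bounded
`Θ : H → ℓ²` with `T_Φ ∘ Θ = 0` such that `φᵍᵈₙ = (A⁻¹)* S_Φ^{-1} φₙ + Θ*(δₙ)` for all n. -/
theorem statement8 (φ φgd : ℕ → H) (hφ : IsFrame φ) (hφgd : IsFrame φgd)
    (Uφ V : H →L[ℂ] Ltwo) (hUφ : IsAnalysisOp φ Uφ) (hV : IsAnalysisOp φgd V)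
    (Sinv : H →L[ℂ] H)
    (hS1 : (adjoint Uφ ∘L Uφ) ∘L Sinv = 1) (hS2 : Sinv ∘L (adjoint Uφ ∘L Uφ) = 1)
    (A Ainv : H →L[ℂ] H) (hA1 : A ∘L Ainv = 1) (hA2 : Ainv ∘L A = 1) :
    adjoint Uφ ∘L V = Ainv ↔
      ∃ Θ : H →L[ℂ] Ltwo, adjoint Uφ ∘L Θ = 0 ∧
        ∀ n : ℕ, φgd n = adjoint Ainv (Sinv (φ n)) + adjoint Θ (lp.single 2 n 1) := by
  have hSsa := Sinv_selfadj Uφ Sinv hS1 hS2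
  constructor
  · intro hdual
    refine ⟨V - Uφ ∘L (Sinv ∘L Ainv), ?_, ?_⟩
    · rw [ContinuousLinearMap.comp_sub, hdual, ← ContinuousLinearMap.comp_assoc,
        ← ContinuousLinearMap.comp_assoc, hS1]
      change Ainv - (ContinuousLinearMap.id ℂ H).comp Ainv = 0
      rw [ContinuousLinearMap.id_comp, sub_self]
    · intro n
      have h1 : adjoint (V - Uφ ∘L (Sinv ∘L Ainv)) (lp.single 2 n 1)
          = adjoint V (lp.single 2 n 1)
            - adjoint Ainv (Sinv (adjoint Uφ (lp.single 2 n 1))) := by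
        rw [map_sub]
        simp only [ContinuousLinearMap.sub_apply]
        congr 1
        rw [adjoint_comp, adjoint_comp, hSsa]
        rfl
      rw [h1, adjoint_single φgd V hV, adjoint_single φ Uφ hUφ]
      abel
  · rintro ⟨Θ, hΘ0, hΘ⟩
    have key : ∀ f : H, V f = Uφ (Sinv (Ainv f)) + Θ f := by
      intro f
      apply lp.ext
      funext n
      have : (↑(Uφ (Sinv (Ainv f)) + Θ f) : ∀ _ : ℕ, ℂ) n
          = Uφ (Sinv (Ainv f)) n + Θ f n := rfl
      rw [hV f n, hΘ n, this, hUφ]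
      rw [inner_add_left, adjoint_inner_left, adjoint_inner_left,
        lp.inner_single_left]
      have : ⟪Sinv (φ n), Ainv f⟫ = ⟪φ n, Sinv (Ainv f)⟫ := by
        rw [← adjoint_inner_right, hSsa]
      rw [this]
      simp [inner]
  -- use key
    ext f
    have h2 : adjoint Uφ (V f) = adjoint Uφ (Uφ (Sinv (Ainv f))) + adjoint Uφ (Θ f) := by
      rw [key f, map_add]
    have h3 : adjoint Uφ (Θ f) = 0 := by
      have := congrFun (congrArg DFunLike.coe hΘ0) f
      simpa using this
    have h4 : adjoint Uφ (Uφ (Sinv (Ainv f))) = Ainv f := by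
      have := congrFun (congrArg DFunLike.coe hS1) (Ainv f)
      simpa using this
    simpa [h3, h4] using h2
end
end

section
/- Let Φ = (φ_n)_n and Ψ = (ψ_n)_n be two frames for H. Then there exist constants ε > 0 and C > 0 (depending only on Φ and Ψ) with the following property: if the difference sequence Φ − Ψ = (φ_n − ψ_n)_n is a Bessel sequence with Bessel bound M_{Φ−Ψ} ≤ ε, then there exists a g-dual frame Ψ^{gd} = (ψ^{gd}_n)_n of Ψ such that T_Ψ U_{Ψ^{gd}} = S_Φ and the sequence Φ − Ψ^{gd} = (φ_n − ψ^{gd}_n)_n is a Bessel sequence with Bessel bound at most C · M_{Φ−Ψ}. -/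
noncomputable section

open ContinuousLinearMap
open scoped ComplexInnerProductSpace ENNReal

variable {H : Type*} [NormedAddCommGroup H] [InnerProductSpace ℂ H] [CompleteSpace H]

/-! The g-dual is `ψᵍᵈₙ = S_Φ S_Ψ⁻¹ ψₙ`, whose analysis operator is `U_Ψ B` with `B = S_Ψ⁻¹ S_Φ`,
so that `T_Ψ U_Ψ B = S_Φ`. With `D = U_Φ - U_Ψ` (of norm at most `√M'`),
`U_Φ - U_Ψ B = D + U_Ψ S_Ψ⁻¹ (S_Ψ - S_Φ)` and `S_Ψ - S_Φ = T_Ψ (U_Ψ - U_Φ) + (T_Ψ - T_Φ) U_Φ`,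
so `‖U_Φ - U_Ψ B‖ ≤ (1 + ‖U_Ψ‖ ‖S_Ψ⁻¹‖ (‖U_Ψ‖ + ‖U_Φ‖)) ‖D‖`; squaring gives the Bessel bound. -/

section Operators

variable {𝕜 E F : Type*} [RCLike 𝕜]

theorem ContinuousLinearMap.exists_pos_mul_norm_le_of_isUnit_comp
    [NormedAddCommGroup E] [NormedSpace 𝕜 E] [NormedAddCommGroup F] [NormedSpace 𝕜 F]
    {A : F →L[𝕜] E} {V : E →L[𝕜] F} (h : IsUnit (A ∘L V)) :
    ∃ c > (0 : ℝ), ∀ x, c * ‖x‖ ≤ ‖V x‖ := by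
  set W : F →L[𝕜] E := ↑h.unit⁻¹ ∘L A
  have hW : ∀ x, W (V x) = x := fun x => congr($(h.val_inv_mul) x)
  refine ⟨(‖W‖ + 1)⁻¹, by positivity, fun x => ?_⟩
  rw [inv_mul_le_iff₀ (by positivity)]
  calc ‖x‖ = ‖W (V x)‖ := by rw [hW]
    _ ≤ ‖W‖ * ‖V x‖ := W.le_opNorm _
    _ ≤ (‖W‖ + 1) * ‖V x‖ := by gcongr; linarith

theorem ContinuousLinearMap.norm_sq_mul_le_of_forall_norm_sq_le
    [NormedAddCommGroup E] [NormedSpace 𝕜 E] [NormedAddCommGroup F] [NormedSpace 𝕜 F]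
    (D : E →L[𝕜] F) {M : ℝ} (h : ∀ x, ‖D x‖ ^ 2 ≤ M * ‖x‖ ^ 2) (x : E) :
    ‖D‖ ^ 2 * ‖x‖ ^ 2 ≤ M * ‖x‖ ^ 2 := by
  rcases eq_or_ne x 0 with rfl | hx
  · simp
  have hM : 0 ≤ M := nonneg_of_mul_nonneg_left ((sq_nonneg _).trans (h x))
    (by positivity)
  have hD : ‖D‖ ≤ √M := D.opNorm_le_bound (Real.sqrt_nonneg M) fun y => by
    rw [← Real.sqrt_sq (norm_nonneg y), ← Real.sqrt_mul hM]
    exact Real.le_sqrt_of_sq_le (h y)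
  gcongr
  calc ‖D‖ ^ 2 ≤ √M ^ 2 := by gcongr
    _ = M := Real.sq_sqrt hM

variable [NormedAddCommGroup E] [InnerProductSpace 𝕜 E] [CompleteSpace E]
  [NormedAddCommGroup F] [InnerProductSpace 𝕜 F] [CompleteSpace F]

theorem ContinuousLinearMap.norm_adjoint_comp_self_sub_le (U U' : E →L[𝕜] F) :
    ‖adjoint U ∘L U - adjoint U' ∘L U'‖ ≤ (‖U‖ + ‖U'‖) * ‖U - U'‖ := by
  have hsplit : adjoint U ∘L U - adjoint U' ∘L U'
      = adjoint U ∘L (U - U') + adjoint (U - U') ∘L U' := by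
    simp only [comp_sub, map_sub, sub_comp]; abel
  calc ‖adjoint U ∘L U - adjoint U' ∘L U'‖
      ≤ ‖adjoint U‖ * ‖U - U'‖ + ‖adjoint (U - U')‖ * ‖U'‖ := by
        rw [hsplit]
        exact (norm_add_le _ _).trans (add_le_add (opNorm_comp_le _ _) (opNorm_comp_le _ _))
    _ = (‖U‖ + ‖U'‖) * ‖U - U'‖ := by
        simp only [LinearIsometryEquiv.norm_map]; ring

theorem ContinuousLinearMap.norm_sub_comp_inv_comp_le (U U' : E →L[𝕜] F)
    (u : (E →L[𝕜] E)ˣ) (hu : (u : E →L[𝕜] E) = adjoint U' ∘L U') :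
    ‖U - U' ∘L ↑u⁻¹ ∘L adjoint U ∘L U‖
      ≤ (1 + ‖U'‖ * ‖(↑u⁻¹ : E →L[𝕜] E)‖ * (‖U'‖ + ‖U‖)) * ‖U - U'‖ := by
  have hinv : U' ∘L ↑u⁻¹ ∘L adjoint U' ∘L U' = U' := by
    rw [← hu, ← mul_def, u.inv_mul, one_def, comp_id]
  have hsplit : U - U' ∘L ↑u⁻¹ ∘L adjoint U ∘L U
      = (U - U') + U' ∘L ↑u⁻¹ ∘L (adjoint U' ∘L U' - adjoint U ∘L U) := by
    simp only [comp_sub, ← comp_assoc] at hinv ⊢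
    rw [hinv]; abel
  rw [hsplit]
  calc _ ≤ ‖U - U'‖ + ‖U'‖ * (‖(↑u⁻¹ : E →L[𝕜] E)‖ * ((‖U'‖ + ‖U‖) * ‖U' - U‖)) := by
        refine (norm_add_le _ _).trans (add_le_add le_rfl ?_)
        refine (opNorm_comp_le _ _).trans (mul_le_mul_of_nonneg_left ?_ (norm_nonneg _))
        refine (opNorm_comp_le _ _).trans (mul_le_mul_of_nonneg_left ?_ (norm_nonneg _))
        exact norm_adjoint_comp_self_sub_le U' U
    _ = _ := by rw [norm_sub_rev U' U]; ring

end Operators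

namespace IsAnalysisOp

variable {E : Type*} [NormedAddCommGroup E] [InnerProductSpace ℂ E]
  {φ ψ : ℕ → E} {U V : E →L[ℂ] Ltwo}

theorem hasSum_norm_inner_sq (hU : IsAnalysisOp φ U) (f : E) :
    HasSum (fun n => ‖(⟪φ n, f⟫ : ℂ)‖ ^ 2) (‖U f‖ ^ 2) := by
  simpa [← hU f] using lp.hasSum_norm (p := 2) (by norm_num) (U f)

theorem isBesselBound_iff (hU : IsAnalysisOp φ U) {M : ℝ} :
    IsBesselBound φ M ↔ ∀ f, ‖U f‖ ^ 2 ≤ M * ‖f‖ ^ 2 :=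
  forall_congr' fun f => by
    simp only [(hU.hasSum_norm_inner_sq f).summable, (hU.hasSum_norm_inner_sq f).tsum_eq,
      true_and]

theorem isBesselBound_norm_sq (hU : IsAnalysisOp φ U) : IsBesselBound φ (‖U‖ ^ 2) :=
  hU.isBesselBound_iff.2 fun f => by rw [← mul_pow]; gcongr; exact U.le_opNorm f

theorem sub (hU : IsAnalysisOp φ U) (hV : IsAnalysisOp ψ V) :
    IsAnalysisOp (fun n => φ n - ψ n) (U - V) := fun f n => by
  simp [hU f n, hV f n]

theorem comp [CompleteSpace E] (hU : IsAnalysisOp φ U) (B : E →L[ℂ] E) :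
    IsAnalysisOp (fun n => adjoint B (φ n)) (U ∘L B) := fun f n => by
  rw [comp_apply, hU, adjoint_inner_left]

theorem isUnit_adjoint_comp_self [CompleteSpace E] (hU : IsAnalysisOp φ U) (h : IsFrame φ) :
    IsUnit (adjoint U ∘L U) := by
  obtain ⟨m, -, hm, -, hlow⟩ := h
  refine isUnit_of_forall_le_norm_inner_map _ (c := m.toNNReal) (by simpa using hm) fun f => ?_
  rw [comp_apply, adjoint_inner_left, inner_self_eq_norm_sq_to_K, Real.coe_toNNReal _ hm.le,
    mul_comm]
  simpa [← (hU.hasSum_norm_inner_sq f).tsum_eq] using hlow f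

theorem isFrame_of_isUnit_comp (hV : IsAnalysisOp ψ V) {A : Ltwo →L[ℂ] E}
    (h : IsUnit (A ∘L V)) : IsFrame ψ := by
  obtain ⟨c, hc, hlow⟩ := exists_pos_mul_norm_le_of_isUnit_comp h
  refine ⟨c ^ 2, ‖V‖ ^ 2, by positivity, hV.isBesselBound_norm_sq, fun f => ?_⟩
  rw [(hV.hasSum_norm_inner_sq f).tsum_eq, ← mul_pow]
  exact pow_le_pow_left₀ (by positivity) (hlow f) 2

end IsAnalysisOp

/-- Let Φ, Ψ be frames for H.  Then there are constants ε, C > 0 such that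
whenever Φ - Ψ is a Bessel sequence with bound `M' ≤ ε`, there is a g-dual frame Ψᵍᵈ of Ψ
(with analysis operator `V`, `T_Ψ U_{Ψᵍᵈ}` invertible) such that `T_Ψ U_{Ψᵍᵈ} = S_Φ` and
Φ - Ψᵍᵈ is a Bessel sequence with bound `C * M'`. -/
theorem statement10 (φ ψ : ℕ → H) (hφ : IsFrame φ) (hψ : IsFrame ψ)
    (Uφ Uψ : H →L[ℂ] Ltwo) (hUφ : IsAnalysisOp φ Uφ) (hUψ : IsAnalysisOp ψ Uψ) :
    ∃ ε > (0 : ℝ), ∃ C > (0 : ℝ), ∀ M' : ℝ,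
      IsBesselBound (fun n => φ n - ψ n) M' → M' ≤ ε →
      ∃ (ψgd : ℕ → H) (V : H →L[ℂ] Ltwo),
        IsFrame ψgd ∧ IsAnalysisOp ψgd V ∧
        IsUnit (adjoint Uψ ∘L V) ∧
        adjoint Uψ ∘L V = adjoint Uφ ∘L Uφ ∧
        IsBesselBound (fun n => φ n - ψgd n) (C * M') := by
  obtain ⟨u, hu⟩ := hUψ.isUnit_adjoint_comp_self hψ
  set B : H →L[ℂ] H := ↑u⁻¹ ∘L adjoint Uφ ∘L Uφ
  have hTV : adjoint Uψ ∘L (Uψ ∘L B) = adjoint Uφ ∘L Uφ := by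
    rw [← comp_assoc, ← hu, ← comp_assoc, ← mul_def (u : H →L[ℂ] H), u.mul_inv, one_def,
      id_comp]
  have hgd := hUψ.comp B
  have hunit : IsUnit (adjoint Uψ ∘L (Uψ ∘L B)) := hTV ▸ hUφ.isUnit_adjoint_comp_self hφ
  set c := 1 + ‖Uψ‖ * ‖(↑u⁻¹ : H →L[ℂ] H)‖ * (‖Uψ‖ + ‖Uφ‖)
  refine ⟨1, one_pos, c ^ 2, by positivity, fun M' hM' _ =>
    ⟨_, _, hgd.isFrame_of_isUnit_comp hunit, hgd, hunit, hTV, ?_⟩⟩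
  have hnorm := norm_sub_comp_inv_comp_le Uφ Uψ u hu
  refine (hUφ.sub hgd).isBesselBound_iff.2 fun f => ?_
  have hD := (Uφ - Uψ).norm_sq_mul_le_of_forall_norm_sq_le
    ((hUφ.sub hUψ).isBesselBound_iff.1 hM') f
  calc ‖(Uφ - Uψ ∘L B) f‖ ^ 2 ≤ (c * ‖Uφ - Uψ‖ * ‖f‖) ^ 2 := by
        gcongr
        exact ((Uφ - Uψ ∘L B).le_opNorm f).trans
          (mul_le_mul_of_nonneg_right hnorm (norm_nonneg f))
    _ = c ^ 2 * (‖Uφ - Uψ‖ ^ 2 * ‖f‖ ^ 2) := by ring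
    _ ≤ c ^ 2 * M' * ‖f‖ ^ 2 := by rw [mul_assoc]; gcongr
end
end
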